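/- arXiv:2008.07454 — 4 statements merged into one kernel-verified Lean document; each statement's English description precedes it below -/
import Mathlib

section
/- Let σ, O, ρ, A, B be m×m complex matrices with σ² = 1, O and ρ Hermitian, and define U(θ) = exp(−(iθ/2)•σ) and C(θ) = Tr[O · A · U(θ) · B · ρ · B† · U(θ)† · A†]. Then C(θ) is real for every θ, and there exist real constants a, b, c such that C(θ) = a + b·cos θ + c·sin θ for all real θ. -/
/-!
Since `σ² = 1`, the exponential series splits into its even and odd parts, so
`U(θ) = cos(θ/2) • 1 - i sin(θ/2) • σ`. Substituting this into the trace makes `C(θ)` a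
combination of `cos²(θ/2)`, `sin²(θ/2)` and `sin(θ/2) cos(θ/2)`, i.e. of `1`, `cos θ`, `sin θ`.
Writing `V = A U(θ) B`, `C(θ) = Tr[O (V ρ V†)]` is the trace of a product of two Hermitian
matrices, hence real, so the real parts of the complex coefficients already represent `C`.
-/

open NormedSpace
open scoped Matrix

section Involution

variable {𝔸 : Type*} [Ring 𝔸] [Algebra ℂ 𝔸] [TopologicalSpace 𝔸] [IsTopologicalRing 𝔸]
  [ContinuousSMul ℂ 𝔸] [T2Space 𝔸] {x : 𝔸}

theorem exp_smul_of_sq_eq_one (hx : x ^ 2 = 1) (z : ℂ) :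
    exp (z • x) = Complex.cosh z • (1 : 𝔸) + Complex.sinh z • x := by
  have hx_even (k : ℕ) : x ^ (2 * k) = 1 := by rw [pow_mul, hx, one_pow]
  rw [exp_eq_tsum ℂ]
  refine HasSum.tsum_eq (HasSum.even_add_odd ?_ ?_)
  · convert (Complex.hasSum_cosh z).smul_const (1 : 𝔸) using 2 with k
    rw [smul_pow, hx_even, smul_smul, div_eq_inv_mul]
  · convert (Complex.hasSum_sinh z).smul_const x using 2 with k
    rw [smul_pow, pow_succ x, hx_even, one_mul, smul_smul, div_eq_inv_mul]

theorem exp_neg_I_mul_smul_of_sq_eq_one (hx : x ^ 2 = 1) (θ : ℝ) :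
    exp ((-(Complex.I * θ / 2)) • x) =
      (Real.cos (θ / 2) : ℂ) • (1 : 𝔸) + (-(Complex.I * Real.sin (θ / 2))) • x := by
  have hz : -(Complex.I * θ / 2) = -(((θ / 2 : ℝ) : ℂ) * Complex.I) := by push_cast; ring
  rw [exp_smul_of_sq_eq_one hx, hz, Complex.cosh_neg, Complex.sinh_neg, Complex.cosh_mul_I,
    Complex.sinh_mul_I, Complex.ofReal_cos, Complex.ofReal_sin, mul_comm]

end Involution

theorem Matrix.IsHermitian.star_trace_mul {n R : Type*} [Fintype n] [CommSemiring R] [StarRing R]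
    {A B : Matrix n n R} (hA : A.IsHermitian) (hB : B.IsHermitian) :
    star (A * B).trace = (A * B).trace := by
  rw [← Matrix.trace_conjTranspose, Matrix.conjTranspose_mul, hA.eq, hB.eq, Matrix.trace_mul_comm]

theorem Matrix.trace_mul_smul_add_smul_mul_mul_conjTranspose {n R : Type*} [Fintype n]
    [DecidableEq n] [CommRing R] [StarRing R] (X Y Z σ : Matrix n n R) (c s : R) :
    (X * (c • 1 + s • σ) * Y * (c • 1 + s • σ)ᴴ * Z).trace =
      (c * star c) * (X * Y * Z).trace + (c * star s) * (X * Y * σᴴ * Z).trace +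
        (s * star c) * (X * σ * Y * Z).trace + (s * star s) * (X * σ * Y * σᴴ * Z).trace := by
  simp only [Matrix.conjTranspose_add, Matrix.conjTranspose_smul, Matrix.conjTranspose_one,
    Matrix.mul_add, Matrix.add_mul, Matrix.mul_smul, Matrix.smul_mul, Matrix.mul_one,
    Matrix.trace_add, Matrix.trace_smul, smul_eq_mul]
  ring

theorem exists_real_trig_of_im_eq_zero {f : ℝ → ℂ} (hf : ∀ θ, (f θ).im = 0) {α β γ : ℂ}
    (h : ∀ θ : ℝ, f θ = α + β * Real.cos θ + γ * Real.sin θ) :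
    ∃ a b c : ℝ, ∀ θ : ℝ, f θ = ((a + b * Real.cos θ + c * Real.sin θ : ℝ) : ℂ) := by
  refine ⟨α.re, β.re, γ.re, fun θ => ?_⟩
  have hre := congrArg Complex.re (h θ)
  simp only [Complex.add_re, Complex.mul_re, Complex.ofReal_re, Complex.ofReal_im, mul_zero,
    sub_zero] at hre
  rw [← hre]
  exact Complex.ext rfl (by simpa using hf θ)

/-- The quantum cost `C(θ) = Tr[O · A · U(θ) · B · ρ · B† · U(θ)† · A†]`, with
`U(θ) = exp(−(iθ/2)•σ)` and `σ² = 1`, `O`, `ρ` Hermitian, is real-valued and of the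
trigonometric form `a + b cos θ + c sin θ`. -/
theorem cost_is_real_trig
    (m : ℕ) (σ O ρ A B : Matrix (Fin m) (Fin m) ℂ)
    (hσ : σ ^ 2 = 1) (hO : O.IsHermitian) (hρ : ρ.IsHermitian)
    (U : ℝ → Matrix (Fin m) (Fin m) ℂ)
    (hU : ∀ θ : ℝ, U θ = NormedSpace.exp ((-(Complex.I * θ / 2)) • σ))
    (C : ℝ → ℂ)
    (hC : ∀ θ : ℝ, C θ = Matrix.trace (O * A * U θ * B * ρ * Bᴴ * (U θ)ᴴ * Aᴴ)) :
    (∀ θ : ℝ, (C θ).im = 0) ∧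
    ∃ a b c : ℝ, ∀ θ : ℝ,
      C θ = ((a + b * Real.cos θ + c * Real.sin θ : ℝ) : ℂ) := by
  have hreal (θ : ℝ) : (C θ).im = 0 := by
    set V := A * U θ * B
    have hcyc : O * A * U θ * B * ρ * Bᴴ * (U θ)ᴴ * Aᴴ = O * (V * ρ * Vᴴ) := by
      simp only [V, Matrix.conjTranspose_mul, Matrix.mul_assoc]
    rw [← Complex.conj_eq_iff_im, hC, hcyc]
    exact hO.star_trace_mul (Matrix.isHermitian_mul_mul_conjTranspose V hρ)
  set T₁ := (O * A * (B * ρ * Bᴴ) * Aᴴ).trace with hT₁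
  set T₂ := (O * A * (B * ρ * Bᴴ) * σᴴ * Aᴴ).trace with hT₂
  set T₃ := (O * A * σ * (B * ρ * Bᴴ) * Aᴴ).trace with hT₃
  set T₄ := (O * A * σ * (B * ρ * Bᴴ) * σᴴ * Aᴴ).trace with hT₄
  refine ⟨hreal, exists_real_trig_of_im_eq_zero hreal (α := (T₁ + T₄) / 2) (β := (T₁ - T₄) / 2)
    (γ := Complex.I * (T₂ - T₃) / 2) fun θ => ?_⟩
  have hC' : C θ = (O * A * U θ * (B * ρ * Bᴴ) * (U θ)ᴴ * Aᴴ).trace := by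
    simp only [hC, Matrix.mul_assoc]
  rw [hC', hU, exp_neg_I_mul_smul_of_sq_eq_one hσ,
    Matrix.trace_mul_smul_add_smul_mul_mul_conjTranspose, ← hT₁, ← hT₂, ← hT₃, ← hT₄]
  obtain ⟨t, rfl⟩ : ∃ t, θ = 2 * t := ⟨θ / 2, by ring⟩
  simp only [mul_div_cancel_left₀ t two_ne_zero, Real.cos_two_mul, Real.sin_two_mul, star_neg,
    star_mul', Complex.star_def, Complex.conj_ofReal, Complex.conj_I]
  push_cast
  linear_combination
    T₄ * Complex.sin_sq_add_cos_sq (t : ℂ) - Complex.sin (t : ℂ) ^ 2 * T₄ * Complex.I_sq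
end

section
/- Let p ∈ ℕ and let C : (Fin p → ℝ) → ℝ be continuously differentiable such that for every coordinate l and every point θ, the one-variable function t ↦ C(θ with l-th coordinate replaced by t) has the form a + b·cos t + c·sin t (with a, b, c depending on the other coordinates). Then for all coordinates i, j (possibly equal) and every θ, the mixed partial derivative exists and satisfies ∂ᵢ∂ⱼC(θ) = (1/4)·[ C(θ + (π/2)eᵢ + (π/2)eⱼ) + C(θ − (π/2)eᵢ − (π/2)eⱼ) − C(θ + (π/2)eᵢ − (π/2)eⱼ) − C(θ − (π/2)eᵢ + (π/2)eⱼ) ]. -/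
/-!
Along each coordinate `C` is `a + b cos t + c sin t`, and for such a function the derivative at
`s` is half the difference of its values at `s ± π/2` (parameter shift rule). Hence
`∂ⱼC(θ) = (C(θ + (π/2)eⱼ) - C(θ - (π/2)eⱼ)) / 2`; as a function of `θᵢ` this is again of the form
`a + b cos t + c sin t`, so the shift rule applies once more in the `i`-th coordinate.
-/

open Function Real

/-- Partial derivative of `C` with respect to the `i`-th coordinate. -/
noncomputable def pderiv' {p : ℕ} (i : Fin p) (C : (Fin p → ℝ) → ℝ) : (Fin p → ℝ) → ℝ :=
  fun θ => deriv (fun t => C (Function.update θ i t)) (θ i)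

def IsSinusoid (f : ℝ → ℝ) : Prop :=
  ∃ a b c : ℝ, ∀ t, f t = a + b * cos t + c * sin t

namespace IsSinusoid

variable {f g : ℝ → ℝ}

theorem hasDerivAt_parameterShift (hf : IsSinusoid f) (s : ℝ) :
    HasDerivAt f ((f (s + π / 2) - f (s - π / 2)) / 2) s := by
  obtain ⟨a, b, c, hf⟩ := hf
  have hderiv : HasDerivAt (fun t => a + b * cos t + c * sin t) (c * cos s - b * sin s) s :=
    ((((hasDerivAt_cos s).const_mul b).const_add a).add
      ((hasDerivAt_sin s).const_mul c)).congr_deriv (by ring)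
  rw [show f = fun t => a + b * cos t + c * sin t from funext hf]
  convert hderiv using 1
  simp only [cos_add, sin_add, cos_sub, sin_sub, cos_pi_div_two, sin_pi_div_two]
  ring

theorem comp_add_const (hf : IsSinusoid f) (d : ℝ) : IsSinusoid fun t => f (t + d) := by
  obtain ⟨a, b, c, hf⟩ := hf
  refine ⟨a, b * cos d + c * sin d, c * cos d - b * sin d, fun t => ?_⟩
  simp only [hf, cos_add, sin_add]
  ring

theorem sub (hf : IsSinusoid f) (hg : IsSinusoid g) : IsSinusoid (f - g) := by
  obtain ⟨a, b, c, hf⟩ := hf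
  obtain ⟨a', b', c', hg⟩ := hg
  exact ⟨a - a', b - b', c - c', fun t => by rw [Pi.sub_apply, hf, hg]; ring⟩

theorem div_const (hf : IsSinusoid f) (r : ℝ) : IsSinusoid fun t => f t / r := by
  obtain ⟨a, b, c, hf⟩ := hf
  exact ⟨a / r, b / r, c / r, fun t => by simp only [hf]; ring⟩

end IsSinusoid

section UpdateSingle

variable {ι G : Type*} [DecidableEq ι] [AddCommGroup G] (θ w : ι → G) (i : ι) (x : G)

theorem Function.update_self_add_eq_add_single :
    update θ i (θ i + x) = θ + Pi.single i x := by
  rw [Pi.update_eq_sub_add_single, Pi.single_add]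
  abel

theorem Function.update_self_sub_eq_sub_single :
    update θ i (θ i - x) = θ - Pi.single i x := by
  rw [Pi.update_eq_sub_add_single, Pi.single_sub]
  abel

theorem Function.update_add_eq_update_add :
    update θ i x + w = update (θ + w) i (x + w i) := by
  simp only [Pi.update_eq_sub_add_single, Pi.add_apply, Pi.single_add]
  abel

theorem Function.update_sub_eq_update_sub :
    update θ i x - w = update (θ - w) i (x - w i) := by
  simp only [Pi.update_eq_sub_add_single, Pi.sub_apply, Pi.single_sub]
  abel

end UpdateSingle

theorem pderiv'_eq_parameterShift {p : ℕ} {C : (Fin p → ℝ) → ℝ} {j : Fin p} {η : Fin p → ℝ}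
    (hC : IsSinusoid fun t => C (update η j t)) :
    pderiv' j C η = (C (η + Pi.single j (π / 2)) - C (η - Pi.single j (π / 2))) / 2 := by
  rw [pderiv', (hC.hasDerivAt_parameterShift (η j)).deriv,
    update_self_add_eq_add_single, update_self_sub_eq_sub_single]

theorem hessian_parameter_shift_general {p : ℕ} (C : (Fin p → ℝ) → ℝ)
    (htrig : ∀ (l : Fin p) (θ : Fin p → ℝ), ∃ a b c : ℝ, ∀ t : ℝ,
      C (Function.update θ l t) = a + b * Real.cos t + c * Real.sin t)
    (i j : Fin p) (θ : Fin p → ℝ) :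
    HasDerivAt (fun t => pderiv' j C (Function.update θ i t))
      ((1 / 4) * (C (θ + Pi.single i (Real.pi / 2) + Pi.single j (Real.pi / 2))
          + C (θ - Pi.single i (Real.pi / 2) - Pi.single j (Real.pi / 2))
          - C (θ + Pi.single i (Real.pi / 2) - Pi.single j (Real.pi / 2))
          - C (θ - Pi.single i (Real.pi / 2) + Pi.single j (Real.pi / 2))))
      (θ i) := by
  have hshift (η : Fin p → ℝ) := pderiv'_eq_parameterShift (htrig j η)
  set w : Fin p → ℝ := Pi.single j (π / 2)
  have hline : IsSinusoid fun t => pderiv' j C (update θ i t) := by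
    have hplus := IsSinusoid.comp_add_const (htrig i (θ + w)) (w i)
    have hminus := IsSinusoid.comp_add_const (htrig i (θ - w)) (-w i)
    convert (hplus.sub hminus).div_const 2 using 2 with t
    rw [hshift, update_add_eq_update_add, update_sub_eq_update_sub, sub_eq_add_neg t]
    rfl
  convert hline.hasDerivAt_parameterShift (θ i) using 1
  rw [update_self_add_eq_add_single, update_self_sub_eq_sub_single, hshift, hshift]
  ring

/-- Four-point parameter-shift formula for the Hessian matrix element
`Hᵢⱼ = ∂ᵢ∂ⱼC` of a cost that is trigonometric in each coordinate: the mixed partial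
derivative exists and equals the stated four-point combination. -/
theorem hessian_parameter_shift {p : ℕ} (C : (Fin p → ℝ) → ℝ)
    (hC1 : ContDiff ℝ 1 C)
    (htrig : ∀ (l : Fin p) (θ : Fin p → ℝ), ∃ a b c : ℝ, ∀ t : ℝ,
      C (Function.update θ l t) = a + b * Real.cos t + c * Real.sin t)
    (i j : Fin p) (θ : Fin p → ℝ) :
    HasDerivAt (fun t => pderiv' j C (Function.update θ i t))
      ((1 / 4) * (C (θ + Pi.single i (Real.pi / 2) + Pi.single j (Real.pi / 2))
          + C (θ - Pi.single i (Real.pi / 2) - Pi.single j (Real.pi / 2))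
          - C (θ + Pi.single i (Real.pi / 2) - Pi.single j (Real.pi / 2))
          - C (θ - Pi.single i (Real.pi / 2) + Pi.single j (Real.pi / 2))))
      (θ i) :=
  hessian_parameter_shift_general C htrig i j θ
end

section
/- Let p ∈ ℕ and let C : (Fin p → ℝ) → ℝ be continuously differentiable such that for every coordinate l and every point θ, the one-variable function t ↦ C(θ with l-th coordinate replaced by t) has the form a + b·cos t + c·sin t (with a, b, c depending on the other coordinates). Then for all coordinates i, j and every θ, the Hessian matrix element satisfies the bound |∂ᵢ∂ⱼC(θ)| ≤ (1/2)·( |∂ᵢC(θ + (π/2)eⱼ)| + |∂ᵢC(θ − (π/2)eⱼ)| ). -/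
/-!
Along a coordinate line a trigonometric cost `a + b cos t + c sin t` has derivative
`-b sin t + c cos t = (f (t + π/2) - f (t - π/2)) / 2`, the parameter shift rule. Applying it in
the `j`-th coordinate writes `∂ⱼC` as half the difference of two translates of `C`; the `i`-th
partial derivative commutes with translations and differences, so `∂ᵢ∂ⱼC(θ)` is half the
difference of `∂ᵢC(θ ± (π/2)eⱼ)`, and the triangle inequality concludes.
-/

open Function Real

theorem hasDerivAt_parameter_shift_of_trig {f : ℝ → ℝ} {a b c : ℝ}
    (hf : ∀ t, f t = a + b * cos t + c * sin t) (x : ℝ) :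
    HasDerivAt f ((f (x + π / 2) - f (x - π / 2)) / 2) x := by
  have hderiv : HasDerivAt (fun t => a + b * cos t + c * sin t)
      (b * -sin x + c * cos x) x :=
    (((hasDerivAt_cos x).const_mul b).const_add a).add ((hasDerivAt_sin x).const_mul c)
  rw [funext hf]
  convert hderiv using 1
  simp only [cos_add_pi_div_two, sin_add_pi_div_two, cos_sub_pi_div_two, sin_sub_pi_div_two]
  ring

section Translation

variable {ι M : Type*} [DecidableEq ι] [AddZeroClass M]

theorem update_add_const (θ s : ι → M) (i : ι) (t : M) :
    update θ i t + s = update (θ + s) i (t + s i) := by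
  rw [update_add, update_eq_self]

theorem update_add_eq_add_single (θ : ι → M) (j : ι) (v : M) :
    update θ j (θ j + v) = θ + Pi.single j v := by
  ext k
  rcases eq_or_ne k j with rfl | hk <;> simp [update_of_ne, *]

end Translation

section PartialDerivative

variable {p : ℕ} {C f g : (Fin p → ℝ) → ℝ} {i : Fin p}

theorem pderiv'_comp_add_const (s θ : Fin p → ℝ) :
    pderiv' i (fun x => C (x + s)) θ = pderiv' i C (θ + s) := by
  simp only [pderiv', update_add_const]
  exact deriv_comp_add_const (fun t => C (update (θ + s) i t)) (s i) (θ i)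

theorem pderiv'_comp_sub_const (s θ : Fin p → ℝ) :
    pderiv' i (fun x => C (x - s)) θ = pderiv' i C (θ - s) := by
  simp only [sub_eq_add_neg]
  exact pderiv'_comp_add_const (-s) θ

theorem pderiv'_div_const (d : ℝ) (θ : Fin p → ℝ) :
    pderiv' i (fun x => f x / d) θ = pderiv' i f θ / d :=
  deriv_div_const d

theorem pderiv'_sub {θ : Fin p → ℝ}
    (hf : DifferentiableAt ℝ (fun t => f (update θ i t)) (θ i))
    (hg : DifferentiableAt ℝ (fun t => g (update θ i t)) (θ i)) :
    pderiv' i (fun x => f x - g x) θ = pderiv' i f θ - pderiv' i g θ :=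
  deriv_sub hf hg

theorem differentiable_update_comp_add_const
    (hC : ∀ θ : Fin p → ℝ, Differentiable ℝ (fun t => C (update θ i t))) (θ s : Fin p → ℝ) :
    Differentiable ℝ (fun t => C (update θ i t + s)) := by
  simp only [update_add_const]
  exact (hC (θ + s)).comp (differentiable_id.add_const (s i))

end PartialDerivative

section TrigonometricCost

variable {p : ℕ} {C : (Fin p → ℝ) → ℝ} {l : Fin p}

theorem differentiable_update_of_trig
    (htrig : ∀ θ : Fin p → ℝ, ∃ a b c : ℝ, ∀ t : ℝ,
      C (update θ l t) = a + b * cos t + c * sin t) (θ : Fin p → ℝ) :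
    Differentiable ℝ (fun t => C (update θ l t)) := fun x => by
  obtain ⟨a, b, c, h⟩ := htrig θ
  exact (hasDerivAt_parameter_shift_of_trig h x).differentiableAt

theorem pderiv'_eq_parameter_shift
    (htrig : ∀ θ : Fin p → ℝ, ∃ a b c : ℝ, ∀ t : ℝ,
      C (update θ l t) = a + b * cos t + c * sin t) (θ : Fin p → ℝ) :
    pderiv' l C θ = (C (θ + Pi.single l (π / 2)) - C (θ - Pi.single l (π / 2))) / 2 := by
  obtain ⟨a, b, c, h⟩ := htrig θ
  rw [pderiv', (hasDerivAt_parameter_shift_of_trig h (θ l)).deriv, update_add_eq_add_single,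
    sub_eq_add_neg (θ l), update_add_eq_add_single, Pi.single_neg, ← sub_eq_add_neg]

end TrigonometricCost

theorem hessian_bound_general {p : ℕ} (C : (Fin p → ℝ) → ℝ)
    (htrig : ∀ (l : Fin p) (θ : Fin p → ℝ), ∃ a b c : ℝ, ∀ t : ℝ,
      C (Function.update θ l t) = a + b * Real.cos t + c * Real.sin t)
    (i j : Fin p) (θ : Fin p → ℝ) :
    |pderiv' i (pderiv' j C) θ| ≤
      (1 / 2) * (|pderiv' i C (θ + Pi.single j (Real.pi / 2))|
        + |pderiv' i C (θ - Pi.single j (Real.pi / 2))|) := by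
  set s : Fin p → ℝ := Pi.single j (π / 2)
  have hdiff := differentiable_update_comp_add_const (differentiable_update_of_trig (htrig i)) θ
  have hdiff_sub : Differentiable ℝ (fun t => C (update θ i t - s)) := by
    simpa only [sub_eq_add_neg] using hdiff (-s)
  rw [funext (pderiv'_eq_parameter_shift (htrig j)), pderiv'_div_const,
    pderiv'_sub (hdiff s _) (hdiff_sub _), pderiv'_comp_add_const, pderiv'_comp_sub_const,
    abs_div, abs_two]
  linarith [abs_sub (pderiv' i C (θ + s)) (pderiv' i C (θ - s))]

/-- Bound on the Hessian matrix elements of a cost that is trigonometric in each coordinate: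
`|∂ᵢ∂ⱼC(θ)| ≤ (1/2)(|∂ᵢC(θ + (π/2)eⱼ)| + |∂ᵢC(θ − (π/2)eⱼ)|)`. -/
theorem hessian_bound {p : ℕ} (C : (Fin p → ℝ) → ℝ)
    (hC1 : ContDiff ℝ 1 C)
    (htrig : ∀ (l : Fin p) (θ : Fin p → ℝ), ∃ a b c : ℝ, ∀ t : ℝ,
      C (Function.update θ l t) = a + b * Real.cos t + c * Real.sin t)
    (i j : Fin p) (θ : Fin p → ℝ) :
    |pderiv' i (pderiv' j C) θ| ≤
      (1 / 2) * (|pderiv' i C (θ + Pi.single j (Real.pi / 2))|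
        + |pderiv' i C (θ - Pi.single j (Real.pi / 2))|) :=
  hessian_bound_general C htrig i j θ
end

section
/- Let f : ℝ → ℝ be of the form f(θ) = a + b·cos θ + c·sin θ for real constants a, b, c, and let N ∈ ℕ. Then the N-th derivative of f satisfies f^{(N)}(θ) = 2^{−N} · Σ_ω d(ω,N) · f(θ + ω·π), where the sum runs over the support of ω for the given N, and d(ω,N) are the Pascal-tree coefficients: d(0,0) = 1; d(±1/2,1) = ±1; for even N ≥ 2, d(0,N) = (−1)^{N/2}·2^{N−1} and d(±1,N) = (−1)^{(N−2)/2}·2^{N−2} with support {0,±1}; for odd N ≥ 3, d(±1/2,N) = ±(−1)^{(N−1)/2}·3·2^{N−3} and d(±3/2,N) = ∓(−1)^{(N−1)/2}·2^{N−3} with support {±1/2,±3/2}. -/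
/-- The Pascal-tree coefficients `d(ω, N)`. -/
def pascalD (ω : ℚ) (N : ℕ) : ℤ :=
  if N = 0 then (if ω = 0 then 1 else 0)
  else if N = 1 then (if ω = 1/2 then 1 else if ω = -1/2 then -1 else 0)
  else if N % 2 = 0 then
    (if ω = 0 then (-1) ^ (N / 2) * 2 ^ (N - 1)
     else if ω = 1 ∨ ω = -1 then (-1) ^ ((N - 2) / 2) * 2 ^ (N - 2)
     else 0)
  else
    (if ω = 1/2 then (-1) ^ ((N - 1) / 2) * 3 * 2 ^ (N - 3)
     else if ω = -1/2 then -((-1) ^ ((N - 1) / 2) * 3 * 2 ^ (N - 3))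
     else if ω = 3/2 then -((-1) ^ ((N - 1) / 2) * 2 ^ (N - 3))
     else if ω = -3/2 then (-1) ^ ((N - 1) / 2) * 2 ^ (N - 3)
     else 0)

/-- The support of the Pascal-tree coefficients at order `N`. -/
def pascalSupport (N : ℕ) : Finset ℚ :=
  if N = 0 then {0}
  else if N = 1 then {1/2, -1/2}
  else if N % 2 = 0 then {0, 1, -1}
  else {1/2, -1/2, 3/2, -3/2}

/-!
Write `f = a + g` with `g θ = b cos θ + c sin θ`. Differentiating `g` shifts its argument by a
quarter period, `g' = g (· + π / 2)`, so `f⁽ᴺ⁾(θ) = g (θ + N π / 2)` for `N ≥ 1`. On the other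
side, the Pascal coefficients of order `N ≥ 1` sum to zero, which removes `a`, and `g` is
`π`-antiperiodic, so every shifted value `g (θ + ω π)` is `±g (θ)` (`N` even) or `±g (θ + π / 2)`
(`N` odd), and so is `g (θ + N π / 2)`; the signed Pascal weights then add up to exactly `2 ^ N`.
-/

open Real Finset Function

@[elab_as_elim]
theorem Nat.cases_zero_one_even_odd {P : ℕ → Prop} (zero : P 0) (one : P 1)
    (even : ∀ m, P (2 * m + 2)) (odd : ∀ m, P (2 * m + 3)) (N : ℕ) : P N := by
  match N with
  | 0 => exact zero
  | 1 => exact one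
  | n + 2 =>
    obtain ⟨m, rfl | rfl⟩ := Nat.even_or_odd' n
    exacts [even m, odd m]

theorem iteratedDeriv_eq_comp_add_nsmul {𝕜 E : Type*} [NontriviallyNormedField 𝕜]
    [NormedAddCommGroup E] [NormedSpace 𝕜 E] {F : 𝕜 → E} {s : 𝕜}
    (hF : deriv F = fun x ↦ F (x + s)) (n : ℕ) : iteratedDeriv n F = fun x ↦ F (x + n • s) := by
  induction n with
  | zero => simp
  | succ n ih =>
    rw [iteratedDeriv_succ', hF, iteratedDeriv_comp_add_const, ih]
    funext x
    simp only [succ_nsmul', add_assoc]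

theorem deriv_mul_cos_add_mul_sin (b c : ℝ) :
    deriv (fun θ ↦ b * cos θ + c * sin θ) = fun θ ↦ b * cos (θ + π / 2) + c * sin (θ + π / 2) := by
  funext θ
  simp [cos_add_pi_div_two, sin_add_pi_div_two]

theorem antiperiodic_mul_cos_add_mul_sin (b c : ℝ) :
    Antiperiodic (fun θ ↦ b * cos θ + c * sin θ) π := fun θ ↦ by
  simp only [cos_add_pi, sin_add_pi]; ring

theorem sum_pascalSupport_even (m : ℕ) (w : ℚ → ℝ) :
    ∑ ω ∈ pascalSupport (2 * m + 2), (pascalD ω (2 * m + 2) : ℝ) * w ω =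
      (-1) ^ m * 2 ^ (2 * m) * (w 1 + w (-1) - 2 * w 0) := by
  have hone : 2 * m + 2 ≠ 1 := by omega
  have hpar : (2 * m + 2) % 2 = 0 := by omega
  have hhalf : (2 * m + 2) / 2 = m + 1 := by omega
  norm_num [pascalSupport, pascalD, hone, hpar, hhalf, sum_insert]
  ring

theorem sum_pascalSupport_odd (m : ℕ) (w : ℚ → ℝ) :
    ∑ ω ∈ pascalSupport (2 * m + 3), (pascalD ω (2 * m + 3) : ℝ) * w ω =
      (-1) ^ (m + 1) * 2 ^ (2 * m) * (3 * (w (1 / 2) - w (-1 / 2)) - w (3 / 2) + w (-3 / 2)) := by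
  have hone : 2 * m + 3 ≠ 1 := by omega
  have hpar : (2 * m + 3) % 2 = 1 := by omega
  have hhalf : (2 * m + 2) / 2 = m + 1 := by omega
  norm_num [pascalSupport, pascalD, hone, hpar, hhalf, sum_insert]
  ring

theorem sum_pascalD_eq_zero {N : ℕ} (hN : N ≠ 0) : ∑ ω ∈ pascalSupport N, (pascalD ω N : ℝ) = 0 := by
  cases N using Nat.cases_zero_one_even_odd with
  | zero => exact absurd rfl hN
  | one => norm_num [pascalSupport, pascalD]
  | even m => simpa using (sum_pascalSupport_even m fun _ ↦ 1).trans (by ring)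
  | odd m => simpa using (sum_pascalSupport_odd m fun _ ↦ 1).trans (by ring)

theorem sum_pascalD_mul_of_antiperiodic {F : ℝ → ℝ} (hF : Antiperiodic F π) (N : ℕ) (θ : ℝ) :
    ∑ ω ∈ pascalSupport N, (pascalD ω N : ℝ) * F (θ + ω * π) = 2 ^ N * F (θ + N * (π / 2)) := by
  cases N using Nat.cases_zero_one_even_odd with
  | zero => simp [pascalSupport, pascalD]
  | one =>
    norm_num [pascalSupport, pascalD]
    rw [show θ + -(1 / 2 * π) = θ + π / 2 - π by ring, hF.sub_eq]
    ring_nf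
  | even m =>
    have h0 : θ + (0 : ℚ) * π = θ := by push_cast; ring
    have h1 : θ + (1 : ℚ) * π = θ + π := by push_cast; ring
    have h2 : θ + (-1 : ℚ) * π = θ - π := by push_cast; ring
    have hN : θ + (2 * m + 2 : ℕ) * (π / 2) = θ + (m + 1) • π := by
      rw [nsmul_eq_mul]; push_cast; ring
    rw [sum_pascalSupport_even, h0, h1, h2, hN, hF.add_nsmul_eq, zsmul_eq_mul, hF, hF.sub_eq]
    push_cast
    ring
  | odd m =>
    set x := θ + π / 2
    have h1 : θ + (1 / 2 : ℚ) * π = x := by push_cast; ring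
    have h2 : θ + (-1 / 2 : ℚ) * π = x - π := by push_cast; ring
    have h3 : θ + (3 / 2 : ℚ) * π = x + π := by push_cast; ring
    have h4 : θ + (-3 / 2 : ℚ) * π = x - π - π := by push_cast; ring
    have hN : θ + (2 * m + 3 : ℕ) * (π / 2) = x + (m + 1) • π := by
      rw [nsmul_eq_mul]; push_cast; ring
    rw [sum_pascalSupport_odd, h1, h2, h3, h4, hN, hF.add_nsmul_eq, zsmul_eq_mul, hF.sub_eq,
      hF.sub_eq, hF.sub_eq, hF]
    push_cast
    ring

/-- `N`-th order parameter shift rule: for `f(θ) = a + b cos θ + c sin θ`,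
`f⁽ᴺ⁾(θ) = 2⁻ᴺ Σ_ω d(ω,N) f(θ + ωπ)`, with `d` the Pascal-tree coefficients. -/
theorem nth_order_parameter_shift (a b c : ℝ) (f : ℝ → ℝ)
    (hf : ∀ θ : ℝ, f θ = a + b * Real.cos θ + c * Real.sin θ) (N : ℕ) (θ : ℝ) :
    iteratedDeriv N f θ =
      (1 / 2 ^ N) * ∑ ω ∈ pascalSupport N, (pascalD ω N : ℝ) * f (θ + (ω : ℝ) * Real.pi) := by
  set g : ℝ → ℝ := fun θ ↦ b * cos θ + c * sin θ
  have hfg : f = fun θ ↦ a + g θ := funext fun θ ↦ by rw [hf, add_assoc]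
  obtain rfl | hN := eq_or_ne N 0
  · simp [pascalSupport, pascalD]
  calc iteratedDeriv N f θ = g (θ + N * (π / 2)) := by
        rw [hfg, iteratedDeriv_const_add (Nat.pos_of_ne_zero hN),
          iteratedDeriv_eq_comp_add_nsmul (deriv_mul_cos_add_mul_sin b c), nsmul_eq_mul]
    _ = 1 / 2 ^ N * (∑ ω ∈ pascalSupport N, (pascalD ω N : ℝ) * a +
          ∑ ω ∈ pascalSupport N, (pascalD ω N : ℝ) * g (θ + ω * π)) := by
        rw [← sum_mul, sum_pascalD_eq_zero hN, sum_pascalD_mul_of_antiperiodic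
          (antiperiodic_mul_cos_add_mul_sin b c), zero_mul, zero_add, one_div,
          inv_mul_cancel_left₀ (by positivity)]
    _ = _ := by
        simp only [← sum_add_distrib, ← mul_add, hfg]
end
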